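/- If the union graph of a structured switched linear system contains a nonaccessible state vertex, then the structured switched linear system is not structurally controllable; indeed, there is a state index k such that for every realization, the k-th coordinate of every vector in the switched controllable subspace is zero. -/
import Mathlib


/-- A realization of the structured pattern `(PA, PB)` of a switched linear system:
each matrix vanishes at every fixed-zero (non-free-parameter) position. -/
def IsRealization {m n r : ℕ}
    (PA : Fin m → Fin n → Fin n → Prop) (PB : Fin m → Fin n → Fin r → Prop)
    (A : Fin m → Matrix (Fin n) (Fin n) ℝ) (B : Fin m → Matrix (Fin n) (Fin r) ℝ) : Prop :=
  (∀ i k l, ¬ PA i k l → A i k l = 0) ∧ (∀ i k j, ¬ PB i k j → B i k j = 0)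

/-- The switched controllable subspace `⟨A_1,…,A_m | B_1,…,B_m⟩`: the smallest subspace of
`ℝ^n` containing the columns of every `B i` and invariant under every `A i`. -/
noncomputable def switchedCtrb {m n r : ℕ} (A : Fin m → Matrix (Fin n) (Fin n) ℝ)
    (B : Fin m → Matrix (Fin n) (Fin r) ℝ) : Submodule ℝ (Fin n → ℝ) :=
  sInf {W : Submodule ℝ (Fin n → ℝ) |
    (∀ i j, (fun k => B i k j) ∈ W) ∧ ∀ i, ∀ x ∈ W, (A i).mulVec x ∈ W}

/-- Structural controllability of the structured switched linear system. -/
def StructurallyControllable {m n r : ℕ}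
    (PA : Fin m → Fin n → Fin n → Prop) (PB : Fin m → Fin n → Fin r → Prop) : Prop :=
  ∃ A B, IsRealization PA PB A B ∧ switchedCtrb A B = ⊤

/-- Edge relation of the graph `G_i` of subsystem `i`, on vertices `Fin r ⊕ Fin n`
(inputs on the left, states on the right). -/
def subEdge {m n r : ℕ}
    (PA : Fin m → Fin n → Fin n → Prop) (PB : Fin m → Fin n → Fin r → Prop)
    (i : Fin m) (v w : Fin r ⊕ Fin n) : Prop :=
  match v, w with
  | Sum.inl j, Sum.inr k => PB i k j
  | Sum.inr l, Sum.inr k => PA i k l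
  | _, _ => False

/-- Edge relation of the union graph `G`. -/
def unionEdge {m n r : ℕ}
    (PA : Fin m → Fin n → Fin n → Prop) (PB : Fin m → Fin n → Fin r → Prop)
    (v w : Fin r ⊕ Fin n) : Prop :=
  ∃ i, subEdge PA PB i v w

/-- A state vertex is accessible if some directed path in the union graph starting at an
input vertex reaches it. -/
def Accessible {m n r : ℕ}
    (PA : Fin m → Fin n → Fin n → Prop) (PB : Fin m → Fin n → Fin r → Prop)
    (k : Fin n) : Prop :=
  ∃ j : Fin r, Relation.ReflTransGen (unionEdge PA PB) (Sum.inl j) (Sum.inr k)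

/-- If the union graph contains a nonaccessible state vertex, then the
structured switched linear system is not structurally controllable; indeed there is a
state index `k` such that, for every realization, the `k`-th coordinate of every vector of
the switched controllable subspace vanishes. -/
theorem not_structurallyControllable_of_nonaccessible
    {m n r : ℕ} (PA : Fin m → Fin n → Fin n → Prop) (PB : Fin m → Fin n → Fin r → Prop)
    (h : ∃ k : Fin n, ¬ Accessible PA PB k) :
    ¬ StructurallyControllable PA PB ∧
      ∃ k : Fin n, ∀ (A : Fin m → Matrix (Fin n) (Fin n) ℝ)
        (B : Fin m → Matrix (Fin n) (Fin r) ℝ), IsRealization PA PB A B →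
          ∀ x ∈ switchedCtrb A B, x k = 0 := by
  obtain ⟨k₀, hk₀⟩ := h
  have key : ∀ (A : Fin m → Matrix (Fin n) (Fin n) ℝ)
      (B : Fin m → Matrix (Fin n) (Fin r) ℝ), IsRealization PA PB A B →
        ∀ x ∈ switchedCtrb A B, x k₀ = 0 := by
    intro A B hAB x hx
    set W : Submodule ℝ (Fin n → ℝ) :=
      { carrier := {x | ∀ k : Fin n, ¬ Accessible PA PB k → x k = 0}
        add_mem' := by intro a b ha hb k hk; simp [ha k hk, hb k hk]
        zero_mem' := by intro k hk; rfl
        smul_mem' := by intro c a ha k hk; simp [ha k hk] } with hW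
    have hWmem : W ∈ {W : Submodule ℝ (Fin n → ℝ) |
        (∀ i j, (fun k => B i k j) ∈ W) ∧ ∀ i, ∀ x ∈ W, (A i).mulVec x ∈ W} := by
      constructor
      · intro i j k hk
        apply hAB.2 i k j
        intro hPB
        exact hk ⟨j, Relation.ReflTransGen.single ⟨i, hPB⟩⟩
      · intro i x hxW k hk
        rw [Matrix.mulVec]
        apply Finset.sum_eq_zero
        intro l _
        by_cases hPA : PA i k l
        · have hl : ¬ Accessible PA PB l := by
            intro ⟨j, hp⟩
            exact hk ⟨j, hp.tail ⟨i, hPA⟩⟩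
          simp [dotProduct, hxW l hl]
        · simp [dotProduct, hAB.1 i k l hPA]
    have := sInf_le hWmem
    exact (this hx) k₀ hk₀
  refine ⟨?_, k₀, key⟩
  rintro ⟨A, B, hAB, htop⟩
  have := key A B hAB (Pi.single k₀ 1) (htop ▸ Submodule.mem_top)
  simp at this
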